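/- Let a > 0 be a real constant and let u, f : ℝ² → ℝ be such that on an open neighborhood of a point (x₀,y₀), u is eight times continuously differentiable, f is six times continuously differentiable, and a·(∂²u/∂x² + ∂²u/∂y²) = −f. Define the 9-point stencil coefficients C₀,₀ = 20, C₀,±1 = C±1,₀ = −4, C±1,±1 = −1, and for h > 0 set F(h) := 6·f(x₀,y₀) + (h²/2)·(f^(2,0)(x₀,y₀) + f^(0,2)(x₀,y₀)) + (h⁴/60)·(f^(4,0)(x₀,y₀) + f^(0,4)(x₀,y₀)) + (h⁴/15)·f^(2,2)(x₀,y₀). Then there exist C > 0 and h₀ > 0 such that for all h ∈ (0,h₀], |∑_{k=−1}^{1} ∑_{ℓ=−1}^{1} C_{k,ℓ}·u(x₀+kh, y₀+ℓh) − (h²/a)·F(h)| ≤ C·h⁸; that is, the compact 9-point finite difference scheme h⁻²·∑_{k,ℓ} C_{k,ℓ}·u_h = F/a has sixth order of consistency at (x₀,y₀) for the equation −∇·(a∇u) = f with constant a. -/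

import Mathlib

open Finset

/-- partial derivative in `x`. -/
noncomputable def pdx (v : ℝ → ℝ → ℝ) : ℝ → ℝ → ℝ := fun x y => deriv (fun t => v t y) x
/-- partial derivative in `y`. -/
noncomputable def pdy (v : ℝ → ℝ → ℝ) : ℝ → ℝ → ℝ := fun x y => deriv (fun t => v x t) y
/-- mixed partial derivative `∂^{m+n} v / ∂x^m ∂y^n`. -/
noncomputable def pd (m n : ℕ) (v : ℝ → ℝ → ℝ) : ℝ → ℝ → ℝ := pdx^[m] (pdy^[n] v)

/-- the interior 9-point stencil coefficients. -/
noncomputable def C0 : ℤ → ℤ → ℝ := fun k l =>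
  if k = 0 ∧ l = 0 then 20 else if k = 0 ∨ l = 0 then -4 else -1

/-!
Along the line `t ↦ p + t • (k, l)` the `j`-th derivative of `u` is `(k ∂x + l ∂y)ʲ u`. Weighted
by the stencil, `∑ C_{k,l} (k ∂x + l ∂y)ʲ` vanishes for `j = 0` and for odd `j`, and equals
`-12 Δ`, `-12 Δ²` and `-12 Δ³ - 24 ∂x²∂y² Δ` for `j = 2, 4, 6`. Since `a Δu = -f`, these are `j!`
times the Taylor coefficients of `h² F(h) / a`. Hence the defect of the scheme, as a function
of `h`, has vanishing derivatives of orders `0, …, 7` at `h = 0`, and applying the mean value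
inequality eight times bounds it by `M h⁸ / 8!`, where `M` bounds its eighth derivative.
-/

open Function Polynomial
open Set (EqOn)
open scoped Nat

section DirDeriv

variable {E F : Type*} [NormedAddCommGroup E] [NormedSpace ℝ E]
  [NormedAddCommGroup F] [NormedSpace ℝ F]

-- Through `lineDeriv` rather than `fderiv`, so that `pdx` and `pdy` are `dirDeriv (1, 0)` and
-- `dirDeriv (0, 1)` everywhere, not only where the function is differentiable.
noncomputable def dirDeriv (v : E) (g : E → F) : E → F := fun x => lineDeriv ℝ g x v

variable {U : Set E} {g g₁ g₂ : E → F} {v w : E}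

lemma dirDeriv_eqOn_fderiv (hU : IsOpen U) (hg : DifferentiableOn ℝ g U) :
    EqOn (dirDeriv v g) (fun x => fderiv ℝ g x v) U := fun x hx =>
  ((hg x hx).differentiableAt (hU.mem_nhds hx)).lineDeriv_eq_fderiv

lemma ContDiffOn.dirDeriv_of_isOpen {n : ℕ} (hU : IsOpen U) (hg : ContDiffOn ℝ (n + 1) g U) :
    ContDiffOn ℝ n (dirDeriv v g) U :=
  ((ContinuousLinearMap.apply ℝ F v).contDiff.comp_contDiffOn
    (hg.fderiv_of_isOpen hU le_rfl)).congr
    (dirDeriv_eqOn_fderiv hU (hg.differentiableOn (by simp)))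

lemma ContDiffOn.iterate_dirDeriv_of_isOpen {n j : ℕ} (hU : IsOpen U)
    (hg : ContDiffOn ℝ (n + j : ℕ) g U) : ContDiffOn ℝ n ((dirDeriv v)^[j] g) U := by
  induction j generalizing g with
  | zero => simpa using hg
  | succ j ih =>
    rw [iterate_succ_apply]
    exact ih ((hg.of_le (by norm_cast)).dirDeriv_of_isOpen hU)

lemma Set.EqOn.dirDeriv_of_isOpen (hU : IsOpen U) (h : EqOn g₁ g₂ U) :
    EqOn (dirDeriv v g₁) (dirDeriv v g₂) U := fun _ hx =>
  (Filter.eventuallyEq_of_mem (hU.mem_nhds hx) h).lineDeriv_eq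

lemma Set.EqOn.iterate_dirDeriv_of_isOpen (hU : IsOpen U) (h : EqOn g₁ g₂ U) (v : E) (j : ℕ) :
    EqOn ((dirDeriv v)^[j] g₁) ((dirDeriv v)^[j] g₂) U := by
  induction j with
  | zero => exact h
  | succ j ih => simpa only [iterate_succ_apply'] using ih.dirDeriv_of_isOpen hU

lemma dirDeriv_smul_add_smul_eqOn (hU : IsOpen U) (hg₁ : DifferentiableOn ℝ g₁ U)
    (hg₂ : DifferentiableOn ℝ g₂ U) (c d : ℝ) :
    EqOn (dirDeriv v (c • g₁ + d • g₂)) (c • dirDeriv v g₁ + d • dirDeriv v g₂) U := by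
  intro x hx
  have h₁ := (hg₁ x hx).differentiableAt (hU.mem_nhds hx)
  have h₂ := (hg₂ x hx).differentiableAt (hU.mem_nhds hx)
  rw [dirDeriv_eqOn_fderiv hU ((hg₁.const_smul c).add (hg₂.const_smul d)) hx]
  simp [dirDeriv, h₁.lineDeriv_eq_fderiv, h₂.lineDeriv_eq_fderiv,
    fderiv_add (h₁.const_smul c) (h₂.const_smul d), fderiv_const_smul h₁, fderiv_const_smul h₂]

lemma iterate_dirDeriv_smul_add_smul_eqOn (hU : IsOpen U) {j : ℕ} (hg₁ : ContDiffOn ℝ j g₁ U)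
    (hg₂ : ContDiffOn ℝ j g₂ U) (c d : ℝ) :
    EqOn ((dirDeriv v)^[j] (c • g₁ + d • g₂))
      (c • (dirDeriv v)^[j] g₁ + d • (dirDeriv v)^[j] g₂) U := by
  induction j generalizing g₁ g₂ with
  | zero => exact fun _ _ => rfl
  | succ j ih =>
    simp only [iterate_succ_apply]
    exact ((dirDeriv_smul_add_smul_eqOn hU (hg₁.differentiableOn (by simp))
      (hg₂.differentiableOn (by simp)) c d).iterate_dirDeriv_of_isOpen hU v j).trans
      (ih (hg₁.dirDeriv_of_isOpen hU) (hg₂.dirDeriv_of_isOpen hU))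

lemma iterate_iterate_dirDeriv_smul_add_smul_eqOn (hU : IsOpen U) {m n : ℕ}
    (hg₁ : ContDiffOn ℝ (m + n : ℕ) g₁ U) (hg₂ : ContDiffOn ℝ (m + n : ℕ) g₂ U) (c d : ℝ) :
    EqOn ((dirDeriv v)^[m] ((dirDeriv w)^[n] (c • g₁ + d • g₂)))
      (c • (dirDeriv v)^[m] ((dirDeriv w)^[n] g₁) + d • (dirDeriv v)^[m] ((dirDeriv w)^[n] g₂))
      U :=
  ((iterate_dirDeriv_smul_add_smul_eqOn hU (hg₁.of_le (by norm_cast; omega))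
    (hg₂.of_le (by norm_cast; omega)) c d).iterate_dirDeriv_of_isOpen hU v m).trans
    (iterate_dirDeriv_smul_add_smul_eqOn hU (hg₁.iterate_dirDeriv_of_isOpen hU)
      (hg₂.iterate_dirDeriv_of_isOpen hU) c d)

lemma dirDeriv_dirDeriv_apply_eq_fderiv (hU : IsOpen U) (hg : ContDiffOn ℝ 2 g U) {x : E}
    (hx : x ∈ U) : dirDeriv v (dirDeriv w g) x = fderiv ℝ (fderiv ℝ g) x v w := by
  have hg' : ContDiffOn ℝ 1 (fderiv ℝ g) U := hg.fderiv_of_isOpen hU (by norm_num)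
  have hD : HasFDerivAt (fderiv ℝ g) (fderiv ℝ (fderiv ℝ g) x) x :=
    ((hg'.differentiableOn one_ne_zero x hx).differentiableAt (hU.mem_nhds hx)).hasFDerivAt
  rw [(dirDeriv_eqOn_fderiv hU (hg.differentiableOn two_ne_zero)).dirDeriv_of_isOpen hU hx]
  exact (((ContinuousLinearMap.apply ℝ F w).hasFDerivAt.comp x hD).hasLineDerivAt v).lineDeriv

lemma dirDeriv_comm_eqOn (hU : IsOpen U) (hg : ContDiffOn ℝ 2 g U) :
    EqOn (dirDeriv v (dirDeriv w g)) (dirDeriv w (dirDeriv v g)) U := fun x hx => by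
  rw [dirDeriv_dirDeriv_apply_eq_fderiv hU hg hx, dirDeriv_dirDeriv_apply_eq_fderiv hU hg hx,
    ((hg.contDiffAt (hU.mem_nhds hx)).isSymmSndFDerivAt (by simp)) v w]

lemma iterate_dirDeriv_dirDeriv_comm_eqOn (hU : IsOpen U) {n : ℕ}
    (hg : ContDiffOn ℝ (n + 1 : ℕ) g U) :
    EqOn ((dirDeriv w)^[n] (dirDeriv v g)) (dirDeriv v ((dirDeriv w)^[n] g)) U := by
  induction n generalizing g with
  | zero => exact fun _ _ => rfl
  | succ n ih =>
    simp only [iterate_succ_apply]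
    exact ((dirDeriv_comm_eqOn hU (hg.of_le (by norm_cast; omega))).iterate_dirDeriv_of_isOpen
      hU w n).trans (ih (hg.dirDeriv_of_isOpen hU))

lemma iterate_dirDeriv_comm_eqOn (hU : IsOpen U) {m n : ℕ} (hg : ContDiffOn ℝ (m + n : ℕ) g U) :
    EqOn ((dirDeriv w)^[n] ((dirDeriv v)^[m] g)) ((dirDeriv v)^[m] ((dirDeriv w)^[n] g)) U := by
  induction m generalizing g with
  | zero => exact fun _ _ => rfl
  | succ m ih =>
    simp only [iterate_succ_apply']
    exact (iterate_dirDeriv_dirDeriv_comm_eqOn hU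
      ((hg.of_le (by norm_cast; omega)).iterate_dirDeriv_of_isOpen hU)).trans
      ((ih (hg.of_le (by norm_cast; omega))).dirDeriv_of_isOpen hU)

lemma dirDeriv_smul_add_smul_direction_eqOn (hU : IsOpen U) (hg : DifferentiableOn ℝ g U)
    (k l : ℝ) : EqOn (dirDeriv (k • v + l • w) g) (k • dirDeriv v g + l • dirDeriv w g) U :=
  fun x hx => by simp [dirDeriv_eqOn_fderiv hU hg hx]

lemma sum_antidiagonal_choose_succ_smul (A : ℕ → ℕ → F) (k l : ℝ) (j : ℕ) :
    ∑ p ∈ antidiagonal (j + 1), (j + 1).choose p.1 • (k ^ p.1 * l ^ p.2) • A p.1 p.2 =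
      ∑ p ∈ antidiagonal j, j.choose p.1 • (k ^ p.1 * l ^ p.2) •
        (k • A (p.1 + 1) p.2 + l • A p.1 (p.2 + 1)) := by
  rw [sum_antidiagonal_choose_succ_nsmul (fun i n => (k ^ i * l ^ n) • A i n), add_comm,
    ← sum_add_distrib]
  refine sum_congr rfl fun p hp => ?_
  rw [Nat.choose_symm_of_eq_add (mem_antidiagonal.1 hp).symm, smul_add, smul_add, smul_smul,
    smul_smul]
  congr 3 <;> ring

lemma iterate_dirDeriv_smul_add_smul_direction_eqOn (hU : IsOpen U) (k l : ℝ) {j : ℕ}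
    (hg : ContDiffOn ℝ j g U) :
    EqOn ((dirDeriv (k • v + l • w))^[j] g)
      (∑ p ∈ antidiagonal j, j.choose p.1 • (k ^ p.1 * l ^ p.2) •
        (dirDeriv v)^[p.1] ((dirDeriv w)^[p.2] g)) U := by
  induction j generalizing g with
  | zero => exact fun _ _ => by simp
  | succ j ih =>
    have hdir := (dirDeriv_smul_add_smul_direction_eqOn (v := v) (w := w) hU
      (hg.differentiableOn (by simp)) k l).iterate_dirDeriv_of_isOpen hU (k • v + l • w) j
    have hIH := ih (g := k • dirDeriv v g + l • dirDeriv w g)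
      (((hg.dirDeriv_of_isOpen hU).const_smul k).add ((hg.dirDeriv_of_isOpen hU).const_smul l))
    intro x hx
    rw [iterate_succ_apply, hdir hx, hIH hx, Finset.sum_apply, Finset.sum_apply]
    simp only [Pi.smul_apply]
    refine Eq.trans ?_ (sum_antidiagonal_choose_succ_smul
      (fun i n => (dirDeriv v)^[i] ((dirDeriv w)^[n] g) x) k l j).symm
    refine sum_congr rfl fun p hp => ?_
    have hpj : p.1 + p.2 = j := mem_antidiagonal.1 hp
    have hlin := iterate_iterate_dirDeriv_smul_add_smul_eqOn (v := v) (w := w) (m := p.1)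
      (n := p.2) hU
      ((hg.dirDeriv_of_isOpen (v := v) hU).of_le (by norm_cast; omega))
      ((hg.dirDeriv_of_isOpen (v := w) hU).of_le (by norm_cast; omega)) k l hx
    have hcomm := (iterate_dirDeriv_comm_eqOn (v := v) (w := w) (m := 1) (n := p.2) hU
      (hg.of_le (by norm_cast; omega))).iterate_dirDeriv_of_isOpen hU v p.1 hx
    simp only [Pi.smul_apply, hlin, Pi.add_apply, iterate_one] at hcomm ⊢
    rw [hcomm, ← iterate_succ_apply, ← iterate_succ_apply (dirDeriv w)]

lemma iterate_dirDeriv_eqOn_of_eqOn_laplacian {f : E → F} {c : ℝ} {m n : ℕ} (hU : IsOpen U)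
    (hg : ContDiffOn ℝ (m + n + 2 : ℕ) g U)
    (hf : EqOn f (c • ((dirDeriv v)^[2] g + (dirDeriv w)^[2] g)) U) :
    EqOn ((dirDeriv v)^[m] ((dirDeriv w)^[n] f))
      (c • ((dirDeriv v)^[m + 2] ((dirDeriv w)^[n] g) + (dirDeriv v)^[m] ((dirDeriv w)^[n + 2] g)))
      U := by
  intro x hx
  rw [(hf.iterate_dirDeriv_of_isOpen hU w n).iterate_dirDeriv_of_isOpen hU v m hx, smul_add,
    iterate_iterate_dirDeriv_smul_add_smul_eqOn hU (hg.iterate_dirDeriv_of_isOpen hU)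
      (hg.iterate_dirDeriv_of_isOpen hU) c c hx]
  simp only [Pi.add_apply, Pi.smul_apply]
  rw [(iterate_dirDeriv_comm_eqOn (m := 2) hU
      (hg.of_le (by norm_cast; omega))).iterate_dirDeriv_of_isOpen hU v m hx,
    ← iterate_add_apply, ← iterate_add_apply (dirDeriv w), smul_add]

lemma hasDerivAt_comp_add_smul {x : E} {t : ℝ} (hg : DifferentiableAt ℝ g (x + t • v)) :
    HasDerivAt (fun s => g (x + s • v)) (dirDeriv v g (x + t • v)) t := by
  have hline : HasDerivAt (fun s : ℝ => x + s • v) v t := by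
    simpa using ((hasDerivAt_id t).smul_const v).const_add x
  rw [dirDeriv, hg.lineDeriv_eq_fderiv]
  exact hg.hasFDerivAt.comp_hasDerivAt t hline

lemma hasDerivAt_iterate_dirDeriv_comp_add_smul (hU : IsOpen U) {N j : ℕ}
    (hg : ContDiffOn ℝ N g U) (hj : j < N) {x : E} {t : ℝ} (hx : x + t • v ∈ U) :
    HasDerivAt (fun s => (dirDeriv v)^[j] g (x + s • v))
      ((dirDeriv v)^[j + 1] g (x + t • v)) t := by
  have hgj : ContDiffOn ℝ 1 ((dirDeriv v)^[j] g) U :=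
    (hg.of_le (by norm_cast; omega)).iterate_dirDeriv_of_isOpen (n := 1) hU
  rw [iterate_succ_apply']
  exact hasDerivAt_comp_add_smul
    ((hgj.differentiableOn one_ne_zero _ hx).differentiableAt (hU.mem_nhds hx))

theorem norm_le_mul_pow_div_factorial_of_hasDerivAt {Φ : ℕ → ℝ → F} {δ M : ℝ} {n : ℕ}
    (hd : ∀ j < n, ∀ t ∈ Set.Icc 0 δ, HasDerivAt (Φ j) (Φ (j + 1) t) t)
    (h0 : ∀ j < n, Φ j 0 = 0) (hb : ∀ t ∈ Set.Icc 0 δ, ‖Φ n t‖ ≤ M) :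
    ∀ t ∈ Set.Icc 0 δ, ‖Φ 0 t‖ ≤ M * t ^ n / n ! := by
  induction n generalizing Φ with
  | zero => simpa using hb
  | succ n ih =>
    have hsucc := ih (Φ := fun j => Φ (j + 1)) (fun j hj => hd (j + 1) (by omega))
      (fun j hj => h0 (j + 1) (by omega)) hb
    have hB : ∀ s, HasDerivAt (fun s => M * s ^ (n + 1) / (n + 1) !) (M * s ^ n / n !) s := by
      intro s
      refine (((hasDerivAt_pow (n + 1) s).const_mul M).div_const ((n + 1) ! : ℝ)).congr_deriv ?_
      rw [Nat.factorial_succ]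
      push_cast
      field_simp
    exact image_norm_le_of_norm_deriv_right_le_deriv_boundary
      (fun s hs => (hd 0 n.succ_pos s hs).continuousAt.continuousWithinAt)
      (fun s hs => (hd 0 n.succ_pos s (Set.Ico_subset_Icc_self hs)).hasDerivWithinAt)
      (by simp [h0 0 n.succ_pos]) hB (fun s hs => hsucc s (Set.Ico_subset_Icc_self hs))

lemma exists_pos_forall_add_smul_mem {ι : Type*} (s : Finset ι) (v : ι → E) {x : E}
    (hU : IsOpen U) (hx : x ∈ U) :
    ∃ δ > (0 : ℝ), ∀ t ∈ Set.Icc 0 δ, ∀ i ∈ s, x + t • v i ∈ U := by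
  have hev : ∀ᶠ t in nhds (0 : ℝ), ∀ i ∈ s, x + t • v i ∈ U :=
    (Filter.eventually_all_finset s).2 fun i _ =>
      (continuous_const.add (continuous_id.smul continuous_const)).continuousAt.preimage_mem_nhds
        (by simpa using hU.mem_nhds hx)
  obtain ⟨ε, hε, h⟩ := Metric.eventually_nhds_iff.1 hev
  refine ⟨ε / 2, by positivity, fun t ht => h ?_⟩
  rw [Real.dist_eq, sub_zero, abs_of_nonneg ht.1]
  linarith [ht.2]

lemma Polynomial.eval_zero_iterate_derivative (P : ℝ[X]) (j : ℕ) :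
    (derivative^[j] P).eval 0 = j ! * P.coeff j := by
  rw [← coeff_zero_eq_eval_zero, coeff_iterate_derivative, zero_add, Nat.descFactorial_self,
    nsmul_eq_mul]

theorem exists_abs_sum_mul_sub_eval_le {ι : Type*} (s : Finset ι) (c : ι → ℝ) (v : ι → E)
    (P : ℝ[X]) {g : E → ℝ} {x : E} {N : ℕ} (hU : IsOpen U) (hx : x ∈ U)
    (hg : ContDiffOn ℝ N g U)
    (hP : ∀ j < N, ∑ i ∈ s, c i * (dirDeriv (v i))^[j] g x = j ! * P.coeff j) :
    ∃ C > 0, ∃ h₀ > 0, ∀ h ∈ Set.Ioc 0 h₀,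
      |∑ i ∈ s, c i * g (x + h • v i) - P.eval h| ≤ C * h ^ N := by
  obtain ⟨δ, hδ, hline⟩ := exists_pos_forall_add_smul_mem s v hU hx
  set Φ : ℕ → ℝ → ℝ := fun j t =>
    ∑ i ∈ s, c i * (dirDeriv (v i))^[j] g (x + t • v i) - (derivative^[j] P).eval t
  have hd : ∀ j < N, ∀ t ∈ Set.Icc 0 δ, HasDerivAt (Φ j) (Φ (j + 1) t) t := fun j hj t ht =>
    (HasDerivAt.fun_sum fun i hi => (hasDerivAt_iterate_dirDeriv_comp_add_smul hU hg hj
      (hline t ht i hi)).const_mul (c i)).sub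
      (by simpa only [iterate_succ_apply'] using (derivative^[j] P).hasDerivAt t)
  have h0 : ∀ j < N, Φ j 0 = 0 := fun j hj => by
    simp [Φ, hP j hj, P.eval_zero_iterate_derivative]
  have hcont : ContinuousOn (Φ N) (Set.Icc 0 δ) :=
    (continuousOn_finsetSum s fun i hi => continuousOn_const.mul
      ((((hg.of_le (by simp)).iterate_dirDeriv_of_isOpen (n := 0) hU).continuousOn).comp
        (by fun_prop : Continuous fun t : ℝ => x + t • v i).continuousOn
        fun t ht => hline t ht i hi)).sub (derivative^[N] P).continuous.continuousOn
  obtain ⟨M, hM⟩ := isCompact_Icc.exists_bound_of_continuousOn hcont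
  refine ⟨|M| / N ! + 1, by positivity, δ, hδ, fun h hh => ?_⟩
  have hΦ0 := norm_le_mul_pow_div_factorial_of_hasDerivAt hd h0 hM h (Set.Ioc_subset_Icc_self hh)
  simp only [Φ, iterate_zero_apply, Real.norm_eq_abs] at hΦ0
  have hhN := pow_pos hh.1 N
  have hM' : M * h ^ N / N ! ≤ |M| * h ^ N / N ! := by
    gcongr
    exact le_abs_self M
  calc _ ≤ M * h ^ N / N ! := hΦ0
    _ ≤ (|M| / N ! + 1) * h ^ N := by rw [add_mul, div_mul_eq_mul_div]; linarith

end DirDeriv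

lemma uncurry_pdx (w : ℝ → ℝ → ℝ) : uncurry (pdx w) = dirDeriv (1, 0) (uncurry w) := by
  funext ⟨x, y⟩
  simp only [uncurry_apply_pair, pdx, dirDeriv, lineDeriv, Prod.smul_mk, smul_eq_mul, mul_one,
    mul_zero, Prod.mk_add_mk, add_zero]
  rw [deriv_comp_const_add (fun t => w t y), add_zero]

lemma uncurry_pdy (w : ℝ → ℝ → ℝ) : uncurry (pdy w) = dirDeriv (0, 1) (uncurry w) := by
  funext ⟨x, y⟩
  simp only [uncurry_apply_pair, pdy, dirDeriv, lineDeriv, Prod.smul_mk, smul_eq_mul, mul_one,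
    mul_zero, Prod.mk_add_mk, add_zero]
  rw [deriv_comp_const_add (fun t => w x t), add_zero]

lemma uncurry_pd (m n : ℕ) (w : ℝ → ℝ → ℝ) :
    uncurry (pd m n w) = (dirDeriv (1, 0))^[m] ((dirDeriv (0, 1))^[n] (uncurry w)) := by
  rw [pd, Semiconj.iterate_right (f := uncurry) uncurry_pdx m,
    Semiconj.iterate_right (f := uncurry) uncurry_pdy n]

lemma pd_eq_of_poisson {a : ℝ} {u f : ℝ → ℝ → ℝ} {U : Set (ℝ × ℝ)} {m n : ℕ} (hU : IsOpen U)
    (hu : ContDiffOn ℝ (m + n + 2 : ℕ) (uncurry u) U)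
    (hpde : ∀ p ∈ U, a * (pd 2 0 u p.1 p.2 + pd 0 2 u p.1 p.2) = - f p.1 p.2)
    {x y : ℝ} (hxy : (x, y) ∈ U) :
    pd m n f x y = -a * (pd (m + 2) n u x y + pd m (n + 2) u x y) := by
  have hΔ : EqOn (uncurry f)
      ((-a) • ((dirDeriv (1, 0))^[2] (uncurry u) + (dirDeriv (0, 1))^[2] (uncurry u))) U := by
    intro p hp
    have h := hpde p hp
    rw [← uncurry_apply_pair (pd 2 0 u), ← uncurry_apply_pair (pd 0 2 u), uncurry_pd,
      uncurry_pd] at h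
    simp only [iterate_zero_apply, Prod.mk.eta] at h
    simp only [Pi.smul_apply, Pi.add_apply, smul_eq_mul]
    change f p.1 p.2 = _
    linarith
  rw [← uncurry_apply_pair (pd m n f), ← uncurry_apply_pair (pd (m + 2) n u),
    ← uncurry_apply_pair (pd m (n + 2) u), uncurry_pd, uncurry_pd, uncurry_pd,
    iterate_dirDeriv_eqOn_of_eqOn_laplacian hU hu hΔ hxy]
  rfl

noncomputable def C0Poly (d : ℕ → ℕ → ℝ) : ℝ[X] :=
  C (-6 * (d 2 0 + d 0 2)) * X ^ 2 + C (-(d 4 0 + 2 * d 2 2 + d 0 4) / 2) * X ^ 4 +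
    C (-(d 6 0 + 5 * d 4 2 + 5 * d 2 4 + d 0 6) / 60) * X ^ 6

lemma sum_C0_mul_sum_antidiagonal (d : ℕ → ℕ → ℝ) {j : ℕ} (hj : j < 8) :
    ∑ k ∈ Icc (-1 : ℤ) 1, ∑ l ∈ Icc (-1 : ℤ) 1,
        C0 k l * ∑ p ∈ antidiagonal j, j.choose p.1 • ((k : ℝ) ^ p.1 * (l : ℝ) ^ p.2) • d p.1 p.2 =
      j ! * (C0Poly d).coeff j := by
  have hIcc : Icc (-1 : ℤ) 1 = {-1, 0, 1} := by decide
  simp only [hIcc, C0Poly, Nat.sum_antidiagonal_eq_sum_range_succ_mk, coeff_add, coeff_C_mul,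
    coeff_X_pow]
  interval_cases j <;> simp [sum_range_succ, C0, Nat.choose, Nat.factorial] <;> ring

lemma sum_C0_mul_iterate_dirDeriv {u : ℝ → ℝ → ℝ} {U : Set (ℝ × ℝ)} {j : ℕ} (hU : IsOpen U)
    (hj : j < 8) (hu : ContDiffOn ℝ j (uncurry u) U) {x y : ℝ} (hxy : (x, y) ∈ U) :
    ∑ k ∈ Icc (-1 : ℤ) 1, ∑ l ∈ Icc (-1 : ℤ) 1,
        C0 k l * (dirDeriv ((k : ℝ), (l : ℝ)))^[j] (uncurry u) (x, y) =
      j ! * (C0Poly fun m n => pd m n u x y).coeff j := by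
  rw [← sum_C0_mul_sum_antidiagonal _ hj]
  refine sum_congr rfl fun k _ => sum_congr rfl fun l _ => ?_
  have hkl : ((k : ℝ), (l : ℝ)) = (k : ℝ) • ((1 : ℝ), (0 : ℝ)) + (l : ℝ) • ((0 : ℝ), (1 : ℝ)) := by
    simp
  have hpd : ∀ m n, (dirDeriv (1, 0))^[m] ((dirDeriv (0, 1))^[n] (uncurry u)) (x, y) =
      pd m n u x y := fun m n => (congrFun (uncurry_pd m n u) (x, y)).symm
  rw [hkl, iterate_dirDeriv_smul_add_smul_direction_eqOn hU k l hu hxy, Finset.sum_apply]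
  simp only [Pi.smul_apply, hpd]

theorem stmt0
    (a : ℝ) (ha : 0 < a) (u f : ℝ → ℝ → ℝ) (x₀ y₀ : ℝ)
    (U : Set (ℝ × ℝ)) (hU : IsOpen U) (hmem : (x₀, y₀) ∈ U)
    (hu : ContDiffOn ℝ 8 (Function.uncurry u) U)
    (hpde : ∀ p ∈ U, a * (pd 2 0 u p.1 p.2 + pd 0 2 u p.1 p.2) = - f p.1 p.2)
    (F : ℝ → ℝ)
    (hF : ∀ h : ℝ, F h = 6 * f x₀ y₀
      + h ^ 2 / 2 * (pd 2 0 f x₀ y₀ + pd 0 2 f x₀ y₀)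
      + h ^ 4 / 60 * (pd 4 0 f x₀ y₀ + pd 0 4 f x₀ y₀)
      + h ^ 4 / 15 * pd 2 2 f x₀ y₀) :
    ∃ C > (0 : ℝ), ∃ h₀ > (0 : ℝ), ∀ h ∈ Set.Ioc (0 : ℝ) h₀,
      |(∑ k ∈ Finset.Icc (-1 : ℤ) 1, ∑ l ∈ Finset.Icc (-1 : ℤ) 1,
          C0 k l * u (x₀ + (k : ℝ) * h) (y₀ + (l : ℝ) * h))
        - h ^ 2 / a * F h| ≤ C * h ^ 8 := by
  have hu8 : ContDiffOn ℝ (8 : ℕ) (uncurry u) U := by exact_mod_cast hu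
  have hf : ∀ m n, m + n ≤ 4 →
      pd m n f x₀ y₀ = -a * (pd (m + 2) n u x₀ y₀ + pd m (n + 2) u x₀ y₀) :=
    fun m n hmn => pd_eq_of_poisson hU (hu8.of_le (by norm_cast; omega)) hpde hmem
  obtain ⟨K, hK, h₀, hh₀, hbound⟩ := exists_abs_sum_mul_sub_eval_le
    (Icc (-1 : ℤ) 1 ×ˢ Icc (-1 : ℤ) 1) (fun q => C0 q.1 q.2) (fun q => ((q.1 : ℝ), (q.2 : ℝ)))
    (C0Poly fun m n => pd m n u x₀ y₀) hU hmem hu8 fun j hj => by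
      rw [sum_product]
      exact sum_C0_mul_iterate_dirDeriv hU hj (hu8.of_le (by norm_cast; omega)) hmem
  refine ⟨K, hK, h₀, hh₀, fun h hh => ?_⟩
  convert hbound h hh using 3
  · simp only [sum_product, mul_comm, Prod.smul_mk, smul_eq_mul, Prod.mk_add_mk,
      uncurry_apply_pair]
  · rw [hF, ← show pd 0 0 f x₀ y₀ = f x₀ y₀ from rfl, hf 0 0 (by norm_num), hf 2 0 (by norm_num),
      hf 0 2 (by norm_num), hf 4 0 (by norm_num), hf 0 4 (by norm_num), hf 2 2 (by norm_num)]
    simp only [C0Poly, eval_add, eval_mul, eval_C, eval_pow, eval_X]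
    field_simp
    ring
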